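/- arXiv:2410.02698 — 2 statements merged into one kernel-verified Lean document; each statement's English description precedes it below -/
import Mathlib

section
/- Let G act continuously on a Hausdorff space X and suppose a Borel probability measure μ on G is supported on a compact set K ⊆ G. Let j_x : G → X be g ↦ g⁻¹·x. Then the pushforward measure (j_x)_* μ on X is supported inside the orbit Gx (not just its closure): every point of cl(Gx) \ Gx has an open neighborhood of (j_x)_*μ-measure zero. -/
open MeasureTheory

theorem MeasureTheory.Measure.map_compl_image_eq_zero {α β : Type*} [MeasurableSpace α]
    [MeasurableSpace β] {f : α → β} (hf : Measurable f) {μ : Measure α} {K : Set α}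
    (hK : MeasurableSet (f '' K)) (hsupp : μ Kᶜ = 0) :
    μ.map f (f '' K)ᶜ = 0 := by
  rw [Measure.map_apply hf hK.compl]
  exact measure_mono_null (fun g hg hgK => hg (Set.mem_image_of_mem f hgK)) hsupp

theorem MulAction.image_inv_smul_subset_orbit {G X : Type*} [Group G] [MulAction G X]
    (K : Set G) (x : X) : (fun g : G => g⁻¹ • x) '' K ⊆ MulAction.orbit G x := by
  rintro _ ⟨g, -, rfl⟩
  exact MulAction.mem_orbit x g⁻¹

theorem pushforward_compactly_supported_in_orbit_general
    {G X : Type*} [Group G] [TopologicalSpace G] [IsTopologicalGroup G]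
    [MeasurableSpace G] [BorelSpace G]
    [TopologicalSpace X] [T2Space X] [MeasurableSpace X] [BorelSpace X]
    [MulAction G X] [ContinuousSMul G X]
    (μ : Measure G)
    (K : Set G) (hK : IsCompact K) (hsupp : μ Kᶜ = 0)
    (x : X) :
    ∀ y ∈ closure (MulAction.orbit G x) \ MulAction.orbit G x,
      ∃ U : Set X, IsOpen U ∧ y ∈ U ∧
        Measure.map (fun g : G => g⁻¹ • x) μ U = 0 := by
  intro y hy
  have hcont : Continuous (fun g : G => g⁻¹ • x) := continuous_inv.smul continuous_const
  have hclosed : IsClosed ((fun g : G => g⁻¹ • x) '' K) := (hK.image hcont).isClosed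
  exact ⟨_, hclosed.isOpen_compl,
    fun hyK => hy.2 (MulAction.image_inv_smul_subset_orbit K x hyK),
    Measure.map_compl_image_eq_zero hcont.measurable hclosed.measurableSet hsupp⟩

/-- If `μ` is a Borel probability measure on a topological group `G` acting
continuously on a Hausdorff space `X`, supported on a compact `K ⊆ G`, then the
pushforward under `j_x : g ↦ g⁻¹ • x` is supported inside the orbit `Gx`: every point
of `cl(Gx) \ Gx` has an open neighborhood of pushforward measure zero. -/
theorem pushforward_compactly_supported_in_orbit
    {G X : Type*} [Group G] [TopologicalSpace G] [IsTopologicalGroup G]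
    [MeasurableSpace G] [BorelSpace G]
    [TopologicalSpace X] [T2Space X] [MeasurableSpace X] [BorelSpace X]
    [MulAction G X] [ContinuousSMul G X]
    (μ : Measure G) [IsProbabilityMeasure μ]
    (K : Set G) (hK : IsCompact K) (hsupp : μ Kᶜ = 0)
    (x : X) :
    ∀ y ∈ closure (MulAction.orbit G x) \ MulAction.orbit G x,
      ∃ U : Set X, IsOpen U ∧ y ∈ U ∧
        Measure.map (fun g : G => g⁻¹ • x) μ U = 0 :=
  pushforward_compactly_supported_in_orbit_general μ K hK hsupp x
end

section
/- For each fixed nonzero real diffusivity ν, the transformations (t,x,u) ↦ (t̃, x̃, ũ) with t̃ = (αt+β)/(γt+δ), x̃ = (x+λ₁t+λ₀)/(γt+δ), ũ = (γt+δ)u − γx + λ₁δ − λ₀γ (where αδ − βγ = 1) map solutions of the viscous Burgers' equation u_t + u u_x − ν u_xx = 0 to solutions: if u(t,x) solves the equation on its domain, then so does the transformed function ũ(t̃,x̃). -/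
/-- The point transformations `t̃ = (αt+β)/(γt+δ)`, `x̃ = (x+λ₁t+λ₀)/(γt+δ)`,
`ũ = (γt+δ)u − γx + λ₁δ − λ₀γ` (with `αδ − βγ = 1`) map solutions of the viscous
Burgers' equation `u_t + u u_x − ν u_xx = 0` to solutions, wherever `γt+δ ≠ 0`. -/
theorem burgers_point_symmetry
    (ν α β γ δ l1 l0 : ℝ) (hν : ν ≠ 0) (hdet : α * δ - β * γ = 1)
    (u v : ℝ → ℝ → ℝ)
    (hu : ContDiff ℝ (⊤ : ℕ∞) (Function.uncurry u))
    (hv : ContDiff ℝ (⊤ : ℕ∞) (Function.uncurry v))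
    (hueq : ∀ t x : ℝ,
      deriv (fun s => u s x) t + u t x * deriv (u t) x
        - ν * deriv (deriv (u t)) x = 0)
    (hrel : ∀ t x : ℝ, γ * t + δ ≠ 0 →
      v ((α * t + β) / (γ * t + δ)) ((x + l1 * t + l0) / (γ * t + δ))
        = (γ * t + δ) * u t x - γ * x + l1 * δ - l0 * γ) :
    ∀ t x : ℝ, γ * t + δ ≠ 0 →
      deriv (fun s => v s ((x + l1 * t + l0) / (γ * t + δ)))
          ((α * t + β) / (γ * t + δ))
        + v ((α * t + β) / (γ * t + δ)) ((x + l1 * t + l0) / (γ * t + δ))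
          * deriv (v ((α * t + β) / (γ * t + δ))) ((x + l1 * t + l0) / (γ * t + δ))
        - ν * deriv (deriv (v ((α * t + β) / (γ * t + δ))))
            ((x + l1 * t + l0) / (γ * t + δ)) = 0 := by
  intro t x hD
  set D : ℝ := γ * t + δ with hDdef
  set T₀ : ℝ := (α * t + β) / D with hT₀def
  set X₀ : ℝ := (x + l1 * t + l0) / D with hX₀def
  set S : ℝ → ℝ := fun T => (δ * T - β) / (α - γ * T) with hSdef
  set Y : ℝ → ℝ → ℝ := fun T X => X / (α - γ * T) - l1 * S T - l0 with hYdef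
  have hE : α - γ * T₀ = 1 / D := by
    rw [hT₀def]
    field_simp
    linear_combination hdet
  have hT₀ne : α - γ * T₀ ≠ 0 := by rw [hE]; exact one_div_ne_zero hD
  -- denominator identity
  have hden : ∀ T : ℝ, α - γ * T ≠ 0 → γ * S T + δ = 1 / (α - γ * T) := by
    intro T hT
    rw [hSdef]
    field_simp
    linear_combination hdet
  -- the formula for v on the open set
  have hV : ∀ T X : ℝ, α - γ * T ≠ 0 →
      v T X = (γ * S T + δ) * u (S T) (Y T X) - γ * Y T X + l1 * δ - l0 * γ := by
    intro T X hT
    have h1 : γ * S T + δ ≠ 0 := by rw [hden T hT]; exact one_div_ne_zero hT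
    have hnum : α * S T + β = T * (γ * S T + δ) := by
      have hS : S T * (α - γ * T) = δ * T - β := by rw [hSdef]; exact div_mul_cancel₀ _ hT
      linear_combination hS
    have h2 : (α * S T + β) / (γ * S T + δ) = T := by
      rw [hnum, mul_div_assoc, div_self h1, mul_one]
    have h3' : Y T X + l1 * S T + l0 = X * (γ * S T + δ) := by
      rw [hYdef, hden T hT]
      ring
    have h3 : (Y T X + l1 * S T + l0) / (γ * S T + δ) = X := by
      rw [h3', mul_div_assoc, div_self h1, mul_one]
    have := hrel (S T) (Y T X) h1
    rw [h2, h3] at this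
    exact this
  -- values at the base point
  have hS0 : S T₀ = t := by
    rw [hSdef]
    simp only
    rw [hE, div_div_eq_mul_div, div_one, hT₀def]
    field_simp
    linear_combination t * hdet
  have hden0 : γ * S T₀ + δ = D := by
    rw [hden T₀ hT₀ne, hE, one_div_one_div]
  have hYX : ∀ X : ℝ, Y T₀ X = D * X - l1 * t - l0 := by
    intro X
    rw [hYdef]
    simp only
    rw [hE, hS0, div_div_eq_mul_div, div_one]
    ring
  have hx' : D * X₀ - l1 * t - l0 = x := by
    rw [hX₀def, hDdef]
    have hD' : γ * t + δ ≠ 0 := by rw [hDdef] at hD; exact hD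
    field_simp
    ring
  have hY0 : Y T₀ X₀ = x := by rw [hYX, hx']
  -- smoothness facts for u t
  have hw : ContDiff ℝ (⊤ : ℕ∞) (u t) :=
    hu.comp (ContDiff.prodMk (contDiff_const (c := t)) contDiff_id)
  have hw1 : Differentiable ℝ (u t) := hw.differentiable (by simp)
  have hw' : ContDiff ℝ (↑(⊤ : ℕ∞)) (u t) := hw.of_le (by simp)
  have hw2 : Differentiable ℝ (deriv (u t)) :=
    (contDiff_infty_iff_deriv.mp hw').2.differentiable (by simp)
  -- formula for v T₀ as a function of X
  have hvT₀fun : v T₀ = fun X => D * u t (D * X - l1 * t - l0)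
      - γ * (D * X - l1 * t - l0) + l1 * δ - l0 * γ := by
    funext X
    rw [hV T₀ X hT₀ne, hden0, hS0, hYX]
  -- first x-derivative of v T₀
  have haff : ∀ X : ℝ, HasDerivAt (fun X : ℝ => D * X - l1 * t - l0) D X := by
    intro X
    simpa using (((hasDerivAt_id X).const_mul D).sub_const (l1 * t)).sub_const l0
  have hd1 : deriv (v T₀) = fun X =>
      D * (deriv (u t) (D * X - l1 * t - l0) * D) - γ * D := by
    funext X
    rw [hvT₀fun]
    have hcomp : HasDerivAt (fun X : ℝ => u t (D * X - l1 * t - l0))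
        (deriv (u t) (D * X - l1 * t - l0) * D) X :=
      ((hw1 _).hasDerivAt).comp X (haff X)
    exact ((((hcomp.const_mul D).sub ((haff X).const_mul γ)).add_const
      (l1 * δ)).sub_const (l0 * γ)).deriv
  have hd1val : deriv (v T₀) X₀ = D * (deriv (u t) x * D) - γ * D := by
    simp only [hd1]
    rw [hx']
  -- second x-derivative
  have hd2val : deriv (deriv (v T₀)) X₀
      = D * (deriv (deriv (u t)) x * D * D) := by
    rw [hd1]
    have hcomp2 : HasDerivAt (fun X : ℝ => deriv (u t) (D * X - l1 * t - l0))
        (deriv (deriv (u t)) (D * X₀ - l1 * t - l0) * D) X₀ :=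
      ((hw2 _).hasDerivAt).comp X₀ (haff X₀)
    have := (((hcomp2.mul_const D).const_mul D).sub_const (γ * D)).deriv
    rw [this, hx']
  -- value of v at the base point
  have hval : v T₀ X₀ = D * u t x - γ * x + l1 * δ - l0 * γ := by
    rw [hvT₀fun]
    simp only
    rw [hx']
  -- t-derivative: v (·) X₀ agrees with an explicit function near T₀
  have hopen : {T : ℝ | α - γ * T ≠ 0} ∈ nhds T₀ := by
    have : IsOpen {T : ℝ | α - γ * T ≠ 0} :=
      isOpen_ne_fun (by fun_prop) continuous_const
    exact this.mem_nhds hT₀ne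
  have heq : (fun τ => v τ X₀) =ᶠ[nhds T₀]
      (fun T => (γ * S T + δ) * u (S T) (Y T X₀) - γ * Y T X₀ + l1 * δ - l0 * γ) := by
    filter_upwards [hopen] with T hT
    exact hV T X₀ hT
  -- derivatives of the pieces
  have h2' : HasDerivAt (fun T : ℝ => α - γ * T) (-γ) T₀ := by
    simpa using ((hasDerivAt_id T₀).const_mul γ).const_sub α
  have hSder : HasDerivAt S (D ^ 2) T₀ := by
    have h1' : HasDerivAt (fun T : ℝ => δ * T - β) δ T₀ := by
      simpa using ((hasDerivAt_id T₀).const_mul δ).sub_const β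
    have := h1'.div h2' hT₀ne
    have hval' : (δ * (α - γ * T₀) - (δ * T₀ - β) * -γ) / (α - γ * T₀) ^ 2
        = D ^ 2 := by
      have hnum : δ * (α - γ * T₀) - (δ * T₀ - β) * -γ = 1 := by
        linear_combination hdet
      rw [hnum, hE]
      field_simp
    rw [hSdef]
    exact hval' ▸ this
  set K : ℝ := γ * x + γ * l0 - l1 * δ with hKdef
  have hYder : HasDerivAt (fun T => Y T X₀) (D * K) T₀ := by
    have h3' : HasDerivAt (fun T : ℝ => X₀ / (α - γ * T))
        ((0 * (α - γ * T₀) - X₀ * -γ) / (α - γ * T₀) ^ 2) T₀ :=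
      (hasDerivAt_const T₀ X₀).div h2' hT₀ne
    have hfull := (h3'.sub (hSder.const_mul l1)).sub_const l0
    have hvalY : (0 * (α - γ * T₀) - X₀ * -γ) / (α - γ * T₀) ^ 2 - l1 * D ^ 2
        = D * K := by
      rw [hE, hX₀def, hKdef, hDdef]
      have hD' : γ * t + δ ≠ 0 := by rw [hDdef] at hD; exact hD
      field_simp
      ring
    rw [hYdef]
    simp only
    exact hvalY ▸ hfull
  have hCder : HasDerivAt (fun T => γ * S T + δ) (γ * D ^ 2) T₀ :=
    (hSder.const_mul γ).add_const δ
  -- chain rule for u ∘ (S, Y)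
  have hA := (hu.differentiable (by simp) (t, x)).hasFDerivAt
  have hprod : HasDerivAt (fun T => (S T, Y T X₀)) ((D ^ 2, D * K) : ℝ × ℝ) T₀ :=
    hSder.prodMk hYder
  have hApt : HasFDerivAt (Function.uncurry u)
      (fderiv ℝ (Function.uncurry u) (t, x)) ((fun T => (S T, Y T X₀)) T₀) := by
    simpa [hS0, hY0] using hA
  have huc : HasDerivAt (fun T => u (S T) (Y T X₀))
      (fderiv ℝ (Function.uncurry u) (t, x) (D ^ 2, D * K)) T₀ :=
    by have := hApt.comp_hasDerivAt T₀ hprod; exact this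
  -- decompose the fderiv into partial derivatives
  have h10 : deriv (fun s => u s x) t
      = fderiv ℝ (Function.uncurry u) (t, x) (1, 0) := by
    have hp : HasDerivAt (fun s : ℝ => (s, x)) ((1, 0) : ℝ × ℝ) t :=
      (hasDerivAt_id t).prodMk (hasDerivAt_const t x)
    have := ((hu.differentiable (by simp) (t, x)).hasFDerivAt).comp_hasDerivAt t hp
    exact this.deriv
  have h01 : deriv (u t) x = fderiv ℝ (Function.uncurry u) (t, x) (0, 1) := by
    have hp : HasDerivAt (fun X : ℝ => (t, X)) ((0, 1) : ℝ × ℝ) x :=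
      (hasDerivAt_const x t).prodMk (hasDerivAt_id x)
    have := ((hu.differentiable (by simp) (t, x)).hasFDerivAt).comp_hasDerivAt x hp
    exact this.deriv
  have hAlin : fderiv ℝ (Function.uncurry u) (t, x) (D ^ 2, D * K)
      = D ^ 2 * deriv (fun s => u s x) t + (D * K) * deriv (u t) x := by
    have hsum : ((D ^ 2, D * K) : ℝ × ℝ)
        = D ^ 2 • ((1, 0) : ℝ × ℝ) + (D * K) • ((0, 1) : ℝ × ℝ) := by
      simp
    rw [hsum, map_add, map_smul, map_smul, h10, h01, smul_eq_mul, smul_eq_mul]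
  -- derivative of the t-direction function
  have hGder : HasDerivAt
      (fun T => (γ * S T + δ) * u (S T) (Y T X₀) - γ * Y T X₀ + l1 * δ - l0 * γ)
      (γ * D ^ 2 * u (S T₀) (Y T₀ X₀)
        + (γ * S T₀ + δ) * fderiv ℝ (Function.uncurry u) (t, x) (D ^ 2, D * K)
        - γ * (D * K)) T₀ :=
    (((hCder.mul huc).sub (hYder.const_mul γ)).add_const (l1 * δ)).sub_const
      (l0 * γ)
  have hda : deriv (fun τ => v τ X₀) T₀
      = γ * D ^ 2 * u t x
        + D * (D ^ 2 * deriv (fun s => u s x) t + (D * K) * deriv (u t) x)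
        - γ * (D * K) := by
    rw [heq.deriv_eq, hGder.deriv, hden0, hAlin, hS0, hY0]
  -- assemble
  rw [hda, hval, hd1val, hd2val]
  linear_combination (D ^ 3) * hueq t x
end
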